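/- arXiv:1503.08057 — 4 statements merged into one kernel-verified Lean document; each statement's English description precedes it below -/
import Mathlib

section
/- Let G be a graph containing no triangle and no induced cycle of even length at least 6, let v be a vertex of G and (N_0, N_1, …) be the v-levelling. Let P = (G_1, P_1, …, G_ℓ, P_ℓ, H) be a rooted PCP of order ℓ in a level N_k for some k ≥ 1. If a vertex x' ∈ N_{k−1} has a neighbor in H, then x' has a neighbor in every regular block G_i for 1 ≤ i ≤ ℓ. -/
open SimpleGraph

/-- The chromatic number of `G`, as a natural number. -/
noncomputable def chi {V : Type} (G : SimpleGraph V) : ℕ := G.chromaticNumber.toNat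

/-- The chromatic number of the subgraph of `G` induced by the vertex set `A`. -/
noncomputable def chiSet {V : Type} (G : SimpleGraph V) (A : Set V) : ℕ :=
  (G.induce A).chromaticNumber.toNat

/-- `G` contains no induced cycle of length `n`: there is no graph embedding
(induced-subgraph embedding) of the `n`-cycle into `G`. -/
def NoInducedCycle {V : Type} (G : SimpleGraph V) (n : ℕ) : Prop :=
  IsEmpty (cycleGraph n ↪g G)

/-- The `k`-th level of the `v`-levelling: vertices at distance exactly `k` from `v`. -/
def level {V : Type} (G : SimpleGraph V) (v : V) (k : ℕ) : Set V :=
  {x | G.Reachable v x ∧ G.dist v x = k}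

/-- `N(S)`: the set of vertices adjacent to at least one vertex of `S`. -/
def neighborsOf {V : Type} (G : SimpleGraph V) (S : Set V) : Set V :=
  {x | ∃ s ∈ S, G.Adj s x}

/-- A walk is an induced path: it is a path, and its vertex set induces
no edges other than the path edges. -/
def IsInducedPathW {V : Type} {G : SimpleGraph V} {u w : V} (p : G.Walk u w) : Prop :=
  p.IsPath ∧ ∀ a ∈ p.support, ∀ b ∈ p.support, G.Adj a b → s(a, b) ∈ p.edges

/-- A Parity Changing Path (PCP) of order `ℓ` in `G`: regular blocks `block 0, …, block (ℓ-1)`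
(vertex sets of induced subgraphs), a last block `lastBlock`, induced paths `path i` of
length at least `2` from `y i ∈ block i` to `x i.succ`, with the prescribed shared vertices,
disjointness and edge conditions, an induced odd and an induced even `x i`–`y i` path inside
each regular block, `lastBlock` connected and each regular block `4`-colorable. -/
structure PCP {V : Type} (G : SimpleGraph V) (ℓ : ℕ) where
  block : Fin ℓ → Set V
  lastBlock : Set V
  x : Fin (ℓ + 1) → V
  y : Fin ℓ → V
  path : (i : Fin ℓ) → G.Walk (y i) (x i.succ)
  x_mem : ∀ i : Fin ℓ, x i.castSucc ∈ block i
  y_mem : ∀ i : Fin ℓ, y i ∈ block i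
  xlast_mem : x (Fin.last ℓ) ∈ lastBlock
  path_induced : ∀ i, IsInducedPathW (path i)
  path_length : ∀ i, 2 ≤ (path i).length
  blocks_disjoint : ∀ i j, i ≠ j → Disjoint (block i) (block j)
  block_last_disjoint : ∀ i, Disjoint (block i) lastBlock
  block_path_inter : ∀ i j : Fin ℓ, ∀ w ∈ block i, w ∈ (path j).support →
      (j = i ∧ w = y i) ∨ ((j : ℕ) + 1 = (i : ℕ) ∧ w = x i.castSucc)
  last_path_inter : ∀ j : Fin ℓ, ∀ w ∈ lastBlock, w ∈ (path j).support →
      (j : ℕ) + 1 = ℓ ∧ w = x (Fin.last ℓ)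
  paths_disjoint : ∀ i j : Fin ℓ, i ≠ j → ∀ w,
      w ∈ (path i).support → w ∈ (path j).support → False
  edges_within : ∀ a b : V,
      a ∈ (⋃ i, block i) ∪ lastBlock ∪ (⋃ i, {w | w ∈ (path i).support}) →
      b ∈ (⋃ i, block i) ∪ lastBlock ∪ (⋃ i, {w | w ∈ (path i).support}) →
      G.Adj a b →
      (∃ i, a ∈ block i ∧ b ∈ block i) ∨ (a ∈ lastBlock ∧ b ∈ lastBlock) ∨
        (∃ i, a ∈ (path i).support ∧ b ∈ (path i).support)
  odd_path : ∀ i : Fin ℓ, ∃ p : G.Walk (x i.castSucc) (y i),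
      IsInducedPathW p ∧ (∀ w ∈ p.support, w ∈ block i) ∧ Odd p.length
  even_path : ∀ i : Fin ℓ, ∃ p : G.Walk (x i.castSucc) (y i),
      IsInducedPathW p ∧ (∀ w ∈ p.support, w ∈ block i) ∧ Even p.length
  last_connected : (G.induce lastBlock).Connected
  block_chrom : ∀ i, (G.induce (block i)).chromaticNumber ≤ 4

/-- The origin of a PCP. -/
def PCP.origin {V : Type} {G : SimpleGraph V} {ℓ : ℕ} (P : PCP G ℓ) : V := P.x 0

/-- The vertex set of a PCP. -/
def PCP.support {V : Type} {G : SimpleGraph V} {ℓ : ℕ} (P : PCP G ℓ) : Set V :=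
  (⋃ i, P.block i) ∪ P.lastBlock ∪ (⋃ i, {w | w ∈ (P.path i).support})

/-- The leftovers of a PCP: the chromatic number of its last block. -/
noncomputable def PCP.leftovers {V : Type} {G : SimpleGraph V} {ℓ : ℕ} (P : PCP G ℓ) : ℕ :=
  chiSet G P.lastBlock

/-- A strong PCP: every regular block contains an induced 5-cycle. -/
def PCP.IsStrong {V : Type} {G : SimpleGraph V} {ℓ : ℕ} (P : PCP G ℓ) : Prop :=
  ∀ i : Fin ℓ, ∃ f : cycleGraph 5 ↪g G, ∀ t, f t ∈ P.block i

/-- A PCP lies in the level `N_k` of the `v`-levelling and is rooted there: some vertex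
`u' ∈ N_{k-1}` is adjacent to the origin and to no other vertex of the PCP. -/
def PCP.IsRootedInLevel {V : Type} {G : SimpleGraph V} {ℓ : ℕ} (P : PCP G ℓ)
    (v : V) (k : ℕ) : Prop :=
  P.support ⊆ level G v k ∧
    ∃ u' ∈ level G v (k - 1), G.Adj u' P.origin ∧
      ∀ w ∈ P.support, w ≠ P.origin → ¬ G.Adj u' w

/-! Suppose that `x'` has no neighbour in the block `G_i`. Crossing the other regular blocks along
induced paths, and the last block from `x_{ℓ+1}` to a neighbour `y'` of `x'`, gives walks `A` from
the origin to `x_i` and `B` from `y_i` to `y'` such that `A M B` is an induced path for every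
induced `x_i y_i`-path `M` of `G_i`. Let `z` be the first neighbour of `x'` on `B`. If `x'` has a
neighbour on `A`, then `x'` closes the part of `A M B` between its last neighbour on `A` and `z`
into an induced cycle. Otherwise the root `u'`, which sees only the origin, and an induced path
from `x'` to `u'` through the lower levels close the part of `A M B` up to `z` into an induced
cycle. Either way the cycle has length `|M| + D` for some `D ≥ 4` independent of `M`, and since
`G_i` has induced `x_i y_i`-paths of both parities, one of these cycles is even, of length at
least `6`. -/

section InducedPath

variable {V : Type} {G : SimpleGraph V}

theorem isInducedPathW_nil {u : V} : IsInducedPathW (Walk.nil : G.Walk u u) :=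
  ⟨Walk.IsPath.nil, by simp⟩

theorem IsInducedPathW.reverse {a b : V} {p : G.Walk a b} (h : IsInducedPathW p) :
    IsInducedPathW p.reverse := by
  refine ⟨h.1.reverse, fun s hs t ht hst => ?_⟩
  rw [Walk.support_reverse, List.mem_reverse] at hs ht
  rw [Walk.edges_reverse, List.mem_reverse]
  exact h.2 s hs t ht hst

theorem IsInducedPathW.append {a b c : V} {p : G.Walk a b} {q : G.Walk b c}
    (hp : IsInducedPathW p) (hq : IsInducedPathW q)
    (hdisj : ∀ s ∈ p.support, s ∈ q.support → s = b)
    (hadj : ∀ s ∈ p.support, ∀ t ∈ q.support, s ≠ b → t ≠ b → ¬ G.Adj s t) :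
    IsInducedPathW (p.append q) := by
  refine ⟨?_, ?_⟩
  · rw [Walk.isPath_def, Walk.support_append, List.nodup_append]
    refine ⟨hp.1.support_nodup, hq.1.support_nodup.tail, fun s hs t ht hst => ?_⟩
    subst hst
    obtain rfl := hdisj s hs (List.mem_of_mem_tail ht)
    have hnd := hq.1.support_nodup
    rw [← q.cons_tail_support] at hnd
    exact (List.nodup_cons.mp hnd).1 ht
  have cross : ∀ s ∈ p.support, ∀ t ∈ q.support, G.Adj s t → s(s, t) ∈ (p.append q).edges := by
    intro s hs t ht hst
    rw [Walk.edges_append, List.mem_append]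
    by_cases hsb : s = b
    · subst hsb
      exact Or.inr (hq.2 _ q.start_mem_support _ ht hst)
    by_cases htb : t = b
    · subst htb
      exact Or.inl (hp.2 _ hs _ p.end_mem_support hst)
    exact absurd hst (hadj s hs t ht hsb htb)
  intro s hs t ht hst
  rw [Walk.mem_support_append_iff] at hs ht
  rcases hs with hs | hs <;> rcases ht with ht | ht
  · exact Walk.edges_append p q ▸ List.mem_append_left _ (hp.2 s hs t ht hst)
  · exact cross s hs t ht hst
  · exact Sym2.eq_swap ▸ cross t ht s hs hst.symm
  · exact Walk.edges_append p q ▸ List.mem_append_right _ (hq.2 s hs t ht hst)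

theorem IsInducedPathW.of_append_left {a b c : V} {p : G.Walk a b} {q : G.Walk b c}
    (h : IsInducedPathW (p.append q)) : IsInducedPathW p := by
  have junction : ∀ s ∈ p.support, s ∈ q.support → s = b := fun s hs hs' => by
    by_contra hsb
    exact h.1.ne_of_mem_support_of_append hsb hs hs' rfl
  refine ⟨h.1.of_append_left, fun s hs t ht hst => ?_⟩
  have := h.2 s ((Walk.mem_support_append_iff _ _).2 (Or.inl hs)) t
    ((Walk.mem_support_append_iff _ _).2 (Or.inl ht)) hst
  rw [Walk.edges_append, List.mem_append] at this
  refine this.resolve_right fun he => hst.ne ?_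
  rw [junction s hs (q.fst_mem_support_of_mem_edges he),
    junction t ht (q.snd_mem_support_of_mem_edges he)]

theorem IsInducedPathW.of_append_right {a b c : V} {p : G.Walk a b} {q : G.Walk b c}
    (h : IsInducedPathW (p.append q)) : IsInducedPathW q := by
  have : IsInducedPathW (q.reverse.append p.reverse) := Walk.reverse_append p q ▸ h.reverse
  simpa using this.of_append_left.reverse

/-- A shortest walk inside `S` has no chords. -/
theorem exists_isInducedPathW_of_walk {S : Set V} {a b : V} (p : G.Walk a b)
    (hp : ∀ s ∈ p.support, s ∈ S) :
    ∃ q : G.Walk a b, IsInducedPathW q ∧ ∀ s ∈ q.support, s ∈ S := by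
  classical
  have hex : ∃ n, ∃ q : G.Walk a b, (∀ s ∈ q.support, s ∈ S) ∧ q.length = n := ⟨_, p, hp, rfl⟩
  obtain ⟨q₀, hq₀S, hq₀⟩ := Nat.find_spec hex
  set q := q₀.bypass
  have hqS : ∀ s ∈ q.support, s ∈ S := fun s hs => hq₀S s (q₀.support_bypass_subset_support hs)
  have hmin : ∀ r : G.Walk a b, (∀ s ∈ r.support, s ∈ S) → q.length ≤ r.length := fun r hr =>
    (q₀.length_bypass_le_length).trans (hq₀ ▸ Nat.find_min' hex ⟨r, hr, rfl⟩)
  refine ⟨q, ⟨q₀.bypass_isPath, fun s hs t ht hst => ?_⟩, hqS⟩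
  obtain ⟨i, rfl, hi⟩ := Walk.mem_support_iff_exists_getVert.1 hs
  obtain ⟨j, rfl, hj⟩ := Walk.mem_support_iff_exists_getVert.1 ht
  clear hs ht
  wlog hij : i < j generalizing i j
  · rcases (Nat.lt_or_ge j i) with hji | hji
    · exact Sym2.eq_swap ▸ this j hj i hi hst.symm hji
    · exact absurd (le_antisymm (not_lt.1 hij) hji ▸ hst) (G.loopless.irrefl _)
  have hshort := hmin ((q.take i).append (Walk.cons hst (q.drop j))) fun s hs' => by
    rw [Walk.mem_support_append_iff, Walk.support_cons, List.mem_cons] at hs'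
    rcases hs' with hs' | rfl | hs'
    · exact hqS s ((q.isSubwalk_take i).support_subset hs')
    · exact hqS _ ((q.isSubwalk_take i).support_subset (q.take i).end_mem_support)
    · exact hqS s ((q.isSubwalk_drop j).support_subset hs')
  simp only [Walk.length_append, Walk.length_cons, Walk.take_length, Walk.drop_length] at hshort
  obtain rfl : j = i + 1 := by omega
  exact (q.mk_mem_edges_iff_exists).2 ⟨i, by omega, rfl⟩

theorem SimpleGraph.Walk.exists_eq_append_first {u v : V} (p : G.Walk u v) (Q : V → Prop)
    (h : ∃ t ∈ p.support, Q t) :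
    ∃ (z : V) (q : G.Walk u z) (r : G.Walk z v), p = q.append r ∧ Q z ∧
      ∀ t ∈ q.support, Q t → t = z := by
  induction p with
  | nil =>
    obtain ⟨t, ht, hQ⟩ := h
    rw [Walk.support_nil, List.mem_singleton] at ht
    subst ht
    exact ⟨_, Walk.nil, Walk.nil, rfl, hQ, by simp⟩
  | @cons a b c hadj p ih =>
    by_cases hQa : Q a
    · exact ⟨a, Walk.nil, Walk.cons hadj p, rfl, hQa, by simp⟩
    obtain ⟨t, ht, hQt⟩ := h
    rw [Walk.support_cons, List.mem_cons] at ht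
    obtain ⟨z, q, r, rfl, hQz, hfirst⟩ :=
      ih ⟨t, ht.resolve_left (by rintro rfl; exact hQa hQt), hQt⟩
    refine ⟨z, Walk.cons hadj q, r, rfl, hQz, fun t ht hQt => ?_⟩
    rw [Walk.support_cons, List.mem_cons] at ht
    exact hfirst t (ht.resolve_left (by rintro rfl; exact hQa hQt)) hQt

theorem exists_isInducedPathW_of_connected_induce {S : Set V} (hS : (G.induce S).Connected)
    {a b : V} (ha : a ∈ S) (hb : b ∈ S) :
    ∃ p : G.Walk a b, IsInducedPathW p ∧ ∀ t ∈ p.support, t ∈ S := by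
  obtain ⟨p⟩ := hS.preconnected ⟨a, ha⟩ ⟨b, hb⟩
  refine exists_isInducedPathW_of_walk (p.map (Embedding.induce S).toHom) fun t ht => ?_
  obtain ⟨t, -, rfl⟩ := List.mem_map.1 ((Walk.support_map _ p) ▸ ht)
  exact t.2

end InducedPath

section InducedCycle

variable {V : Type} {G : SimpleGraph V}

def IsInducedCycleW {u : V} (c : G.Walk u u) : Prop :=
  c.IsCycle ∧ ∀ a ∈ c.support, ∀ b ∈ c.support, G.Adj a b → s(a, b) ∈ c.edges

theorem IsInducedCycleW.nonempty_embedding {u : V} {c : G.Walk u u} (hc : IsInducedCycleW c) :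
    Nonempty (cycleGraph c.length ↪g G) := by
  obtain ⟨n, hn⟩ : ∃ n, c.length = n + 2 := ⟨c.length - 2, by have := hc.1.three_le_length; omega⟩
  rw [hn]
  let f : Fin (n + 2) → V := fun t => c.getVert t
  have hinj : Function.Injective f := fun s t hst =>
    Fin.ext (hc.1.getVert_injOn' (by simp only [Set.mem_ofPred_eq]; omega)
      (by simp only [Set.mem_ofPred_eq]; omega) hst)
  have hsucc : ∀ t : Fin (n + 2), f (t + 1) = c.getVert (t + 1) := fun t => by
    rcases Fin.eq_castSucc_or_eq_last t with ⟨t, rfl⟩ | rfl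
    · simp [f]
    · simp [f, ← hn]
  refine ⟨⟨⟨f, hinj⟩, fun {s t} => ?_⟩⟩
  simp only [Function.Embedding.coeFn_mk, cycleGraph_adj, sub_eq_iff_eq_add]
  constructor
  · intro hst
    obtain ⟨i, hi, he⟩ := (c.mk_mem_edges_iff_exists).1
      (hc.2 _ (c.getVert_mem_support _) _ (c.getVert_mem_support _) hst)
    rw [show c.getVert i = f ⟨i, by omega⟩ from rfl, ← hsucc ⟨i, by omega⟩, Sym2.eq_iff] at he
    rcases he with ⟨h1, h2⟩ | ⟨h1, h2⟩
    · exact Or.inr (by rw [← hinj h1, ← hinj h2]; exact add_comm _ _)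
    · exact Or.inl (by rw [← hinj h1, ← hinj h2]; exact add_comm _ _)
  · rintro (rfl | rfl)
    · rw [add_comm, hsucc]
      exact (c.adj_getVert_succ (by omega)).symm
    · rw [add_comm, hsucc]
      exact c.adj_getVert_succ (by omega)

theorem IsInducedPathW.isInducedCycleW_cons_append_cons {a b x u : V} {p : G.Walk a b}
    {R : G.Walk x u} (hp : IsInducedPathW p) (hR : IsInducedPathW R) (hua : G.Adj u a)
    (hbx : G.Adj b x) (hdisj : ∀ t ∈ R.support, t ∉ p.support)
    (hcross : ∀ s ∈ R.support, ∀ t ∈ p.support, G.Adj s t → (s = u ∧ t = a) ∨ (s = x ∧ t = b))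
    (hlen : 0 < p.length + R.length) :
    IsInducedCycleW (Walk.cons hua (p.append (Walk.cons hbx R))) := by
  have hsupp : ∀ t, t ∈ (Walk.cons hua (p.append (Walk.cons hbx R))).support ↔
      t ∈ p.support ∨ t ∈ R.support := fun t => by
    simp only [Walk.support_cons, List.mem_cons, Walk.mem_support_append_iff]
    constructor
    · rintro (rfl | h | rfl | h)
      exacts [Or.inr R.end_mem_support, Or.inl h, Or.inl p.end_mem_support, Or.inr h]
    · rintro (h | h)
      exacts [Or.inr (Or.inl h), Or.inr (Or.inr (Or.inr h))]
  have hedges : ∀ e, e ∈ (Walk.cons hua (p.append (Walk.cons hbx R))).edges ↔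
      e = s(u, a) ∨ e ∈ p.edges ∨ e = s(b, x) ∨ e ∈ R.edges := fun e => by
    simp [Walk.edges_append]
  refine ⟨(Walk.cons_isCycle_iff _ _).2 ⟨?_, fun he => ?_⟩, fun s hs t ht hst => ?_⟩
  · rw [Walk.isPath_def, Walk.support_append, Walk.support_cons, List.tail_cons,
      List.nodup_append]
    exact ⟨hp.1.support_nodup, hR.1.support_nodup, fun s hs t ht hst => hdisj t ht (hst ▸ hs)⟩
  · rw [Walk.edges_append, List.mem_append, Walk.edges_cons, List.mem_cons, Sym2.eq_iff] at he
    rcases he with he | (⟨rfl, -⟩ | ⟨rfl, rfl⟩) | he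
    · exact hdisj u R.end_mem_support (p.fst_mem_support_of_mem_edges he)
    · exact hdisj _ R.end_mem_support p.end_mem_support
    · rw [(Walk.isPath_iff_nil.1 hp.1).length_eq_zero,
        (Walk.isPath_iff_nil.1 hR.1).length_eq_zero] at hlen
      exact lt_irrefl 0 hlen
    · exact hdisj a (R.snd_mem_support_of_mem_edges he) p.start_mem_support
  rw [hedges]
  rcases (hsupp s).1 hs with hs | hs <;> rcases (hsupp t).1 ht with ht | ht
  · exact Or.inr (Or.inl (hp.2 s hs t ht hst))
  · rcases hcross t ht s hs hst.symm with ⟨rfl, rfl⟩ | ⟨rfl, rfl⟩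
    exacts [Or.inl Sym2.eq_swap, Or.inr (Or.inr (Or.inl rfl))]
  · rcases hcross s hs t ht hst with ⟨rfl, rfl⟩ | ⟨rfl, rfl⟩
    exacts [Or.inl rfl, Or.inr (Or.inr (Or.inl Sym2.eq_swap))]
  · exact Or.inr (Or.inr (Or.inr (hR.2 s hs t ht hst)))

end InducedCycle

section ChainDecomposition

variable {V : Type} {G : SimpleGraph V}

structure SimpleGraph.IsChainDecomposition (G : SimpleGraph V) (S : ℕ → Set V) : Prop where
  le_succ_of_mem : ∀ {j j' : ℕ} {w : V}, w ∈ S j → w ∈ S j' → j' ≤ j + 1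
  exists_mem_of_adj : ∀ {j j' : ℕ} {a b : V}, a ∈ S j → b ∈ S j' → G.Adj a b →
    ∃ m, a ∈ S m ∧ b ∈ S m

theorem SimpleGraph.IsChainDecomposition.isInducedPathW_append {S : ℕ → Set V}
    (hS : G.IsChainDecomposition S) {m : ℕ} {a w b : V} {p : G.Walk a w} {q : G.Walk w b}
    (hp : IsInducedPathW p) (hq : IsInducedPathW q)
    (hw : ∀ j < m, ∀ t ∈ S j, t ∈ S m → t = w)
    (hpS : ∀ t ∈ p.support, t = w ∨ ∃ j < m, t ∈ S j)
    (hqS : ∀ t ∈ q.support, t = w ∨ ∃ j, m ≤ j ∧ t ∈ S j) :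
    IsInducedPathW (p.append q) := by
  refine hp.append hq (fun t htp htq => ?_) (fun s hs t ht hsw htw hst => ?_)
  · obtain htw | ⟨j, hj, htj⟩ := hpS t htp
    · exact htw
    obtain htw | ⟨j', hj', htj'⟩ := hqS t htq
    · exact htw
    have := hS.le_succ_of_mem htj htj'
    obtain rfl : j' = m := by omega
    exact hw j hj t htj htj'
  · obtain ⟨j, hj, hsj⟩ := (hpS s hs).resolve_left hsw
    obtain ⟨j', hj', htj'⟩ := (hqS t ht).resolve_left htw
    obtain ⟨n, hsn, htn⟩ := hS.exists_mem_of_adj hsj htj' hst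
    have h1 := hS.le_succ_of_mem hsj hsn
    have h2 := hS.le_succ_of_mem htn htj'
    rcases Nat.lt_or_ge n m with hn | hn
    · obtain rfl : j' = m := by omega
      exact htw (hw n hn t htn htj')
    · obtain rfl : n = m := by omega
      exact hsw (hw j hj s hsj hsn)

end ChainDecomposition

section Levelling

variable {V : Type} {G : SimpleGraph V}

theorem SimpleGraph.Adj.dist_le_dist_add_one {v t s : V} (h : G.Adj t s) :
    G.dist v s ≤ G.dist v t + 1 :=
  (h.reachable.dist_triangle_right v).trans_eq (by rw [dist_eq_one_iff_adj.2 h])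

theorem SimpleGraph.Walk.dist_lt_of_mem_support {v x t : V} (p : G.Walk v x)
    (hp : p.length = G.dist v x) (ht : t ∈ p.support) (htx : t ≠ x) :
    G.dist v t < G.dist v x := by
  classical
  calc G.dist v t ≤ (p.takeUntil t ht).length := dist_le _
    _ < p.length := p.length_takeUntil_lt_length ht htx
    _ = G.dist v x := hp

theorem exists_isInducedPathW_avoiding_level_succ {v x u : V} {m : ℕ} {T : Set V}
    (hT : T ⊆ level G v (m + 1)) (hx : x ∈ level G v m) (hu : u ∈ level G v m) :
    ∃ R : G.Walk x u, IsInducedPathW R ∧ (∀ t ∈ R.support, t ∉ T) ∧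
      ∀ t ∈ R.support, t ≠ x → t ≠ u → ∀ s ∈ T, ¬ G.Adj t s := by
  obtain ⟨p, hp⟩ := hx.1.exists_walk_length_eq_dist
  obtain ⟨q, hq⟩ := hu.1.exists_walk_length_eq_dist
  have hlow : ∀ t ∈ (p.reverse.append q).support, t = x ∨ t = u ∨ G.dist v t < m := by
    intro t ht
    rw [Walk.mem_support_append_iff, Walk.support_reverse, List.mem_reverse] at ht
    rcases ht with ht | ht
    · by_cases htx : t = x
      · exact Or.inl htx
      · exact Or.inr (Or.inr (hx.2 ▸ p.dist_lt_of_mem_support hp ht htx))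
    · by_cases htu : t = u
      · exact Or.inr (Or.inl htu)
      · exact Or.inr (Or.inr (hu.2 ▸ q.dist_lt_of_mem_support hq ht htu))
  obtain ⟨R, hR, hRlow⟩ := exists_isInducedPathW_of_walk _ hlow
  refine ⟨R, hR, fun t ht htT => ?_, fun t ht htx htu s hs hts => ?_⟩
  · have := (hT htT).2
    rcases hRlow t ht with rfl | rfl | h
    exacts [by rw [hx.2] at this; omega, by rw [hu.2] at this; omega, by omega]
  · have h := (hRlow t ht).resolve_left htx |>.resolve_left htu
    have := hts.dist_le_dist_add_one (v := v)
    rw [(hT hs).2] at this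
    omega

end Levelling

section ClosingCycles

variable {V : Type} {G : SimpleGraph V}

theorem exists_isInducedCycleW_length_add_of_exists_adj {o b c d x : V} {S : Set V}
    {A : G.Walk o b} {B : G.Walk c d} (hAS : ∀ t ∈ A.support, t ∈ S) (hBS : ∀ t ∈ B.support, t ∈ S)
    (hxS : x ∉ S) (hxA : ∃ t ∈ A.support, G.Adj x t) (hxb : ¬ G.Adj x b) (hxd : G.Adj x d)
    (hxB : ∀ t ∈ B.support, G.Adj x t → t = d) (hcd : c ≠ d) :
    ∃ D, 4 ≤ D ∧ ∀ M : G.Walk b c, IsInducedPathW (A.append (M.append B)) →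
      (∀ t ∈ M.support, t ∈ S ∧ ¬ G.Adj x t) →
      ∃ (w : V) (C : G.Walk w w), IsInducedCycleW C ∧ C.length = M.length + D := by
  obtain ⟨z, Q, A', hA, hxz, hlast⟩ := A.reverse.exists_eq_append_first (G.Adj x)
    (by simpa only [Walk.support_reverse, List.mem_reverse] using hxA)
  replace hA : A = A'.reverse.append Q.reverse := by
    rw [← Walk.reverse_append, ← hA, Walk.reverse_reverse]
  have hQ : 0 < Q.length := Nat.pos_of_ne_zero fun h => hxb (Walk.eq_of_length_eq_zero h ▸ hxz)
  have hB : 0 < B.length := Nat.pos_of_ne_zero fun h => hcd (Walk.eq_of_length_eq_zero h)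
  refine ⟨Q.length + B.length + 2, by omega, fun M hspine hM => ?_⟩
  rw [hA, ← Walk.append_assoc] at hspine
  have hseg : IsInducedPathW (Q.reverse.append (M.append B)) := hspine.of_append_right
  have hsegS : ∀ t ∈ (Q.reverse.append (M.append B)).support, t ∈ S := by
    intro t ht
    simp only [Walk.mem_support_append_iff, Walk.support_reverse, List.mem_reverse] at ht
    rcases ht with ht | ht | ht
    · exact hAS t (by rw [hA]; simp [Walk.mem_support_append_iff, ht])
    · exact (hM t ht).1
    · exact hBS t ht
  refine ⟨x, _, hseg.isInducedCycleW_cons_append_cons isInducedPathW_nil hxz hxd.symm ?_ ?_ ?_, ?_⟩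
  · simp only [Walk.support_nil, List.mem_singleton, forall_eq]
    exact fun h => hxS (hsegS x h)
  · intro s hs t ht hst
    rw [Walk.support_nil, List.mem_singleton] at hs
    subst hs
    simp only [Walk.mem_support_append_iff, Walk.support_reverse, List.mem_reverse] at ht
    rcases ht with ht | ht | ht
    · exact Or.inl ⟨rfl, hlast t ht hst⟩
    · exact absurd hst (hM t ht).2
    · exact Or.inr ⟨rfl, hxB t ht hst⟩
  · simp only [Walk.length_append, Walk.length_reverse, Walk.length_nil]
    omega
  · simp only [Walk.length_cons, Walk.length_append, Walk.length_reverse, Walk.length_nil]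
    omega

theorem exists_isInducedCycleW_length_add_of_forall_not_adj {o b c d x u : V} {S : Set V}
    {A : G.Walk o b} {B : G.Walk c d} {R : G.Walk x u} (hAS : ∀ t ∈ A.support, t ∈ S)
    (hBS : ∀ t ∈ B.support, t ∈ S) (hxA : ∀ t ∈ A.support, ¬ G.Adj x t) (hxd : G.Adj x d)
    (hxB : ∀ t ∈ B.support, G.Adj x t → t = d) (hcd : c ≠ d) (huo : G.Adj u o)
    (hu : ∀ t ∈ S, G.Adj u t → t = o) (hR : IsInducedPathW R) (hxu : x ≠ u)
    (hRS : ∀ t ∈ R.support, t ∉ S) (hRadj : ∀ t ∈ R.support, t ≠ x → t ≠ u → ∀ s ∈ S, ¬ G.Adj t s) :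
    ∃ D, 4 ≤ D ∧ ∀ M : G.Walk b c, IsInducedPathW (A.append (M.append B)) →
      (∀ t ∈ M.support, t ∈ S ∧ ¬ G.Adj x t) →
      ∃ (w : V) (C : G.Walk w w), IsInducedCycleW C ∧ C.length = M.length + D := by
  have hB : 0 < B.length := Nat.pos_of_ne_zero fun h => hcd (Walk.eq_of_length_eq_zero h)
  have hRlen : 0 < R.length := Nat.pos_of_ne_zero fun h => hxu (Walk.eq_of_length_eq_zero h)
  refine ⟨A.length + B.length + R.length + 2, by omega, fun M hspine hM => ?_⟩
  have hspineS : ∀ t ∈ (A.append (M.append B)).support, t ∈ S := by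
    intro t ht
    simp only [Walk.mem_support_append_iff] at ht
    rcases ht with ht | ht | ht
    exacts [hAS t ht, (hM t ht).1, hBS t ht]
  refine ⟨u, _, hspine.isInducedCycleW_cons_append_cons hR huo hxd.symm
    (fun t ht h => hRS t ht (hspineS t h)) (fun s hs t ht hst => ?_) ?_, ?_⟩
  · by_cases hsx : s = x
    · subst hsx
      simp only [Walk.mem_support_append_iff] at ht
      rcases ht with ht | ht | ht
      · exact absurd hst (hxA t ht)
      · exact absurd hst (hM t ht).2
      · exact Or.inr ⟨rfl, hxB t ht hst⟩
    by_cases hsu : s = u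
    · subst hsu
      exact Or.inl ⟨rfl, hu t (hspineS t ht) hst⟩
    exact absurd hst (hRadj s hs hsx hsu t (hspineS t ht))
  · simp only [Walk.length_append]
    omega
  · simp only [Walk.length_cons, Walk.length_append]
    omega

theorem exists_isInducedCycleW_length_add {o b c d x u : V} {S : Set V} {A : G.Walk o b}
    {B : G.Walk c d} {R : G.Walk x u} (hAS : ∀ t ∈ A.support, t ∈ S)
    (hBS : ∀ t ∈ B.support, t ∈ S) (hxb : ¬ G.Adj x b) (hxc : ¬ G.Adj x c) (hxd : G.Adj x d)
    (huo : G.Adj u o) (hu : ∀ t ∈ S, G.Adj u t → t = o) (hR : IsInducedPathW R) (hxu : x ≠ u)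
    (hRS : ∀ t ∈ R.support, t ∉ S) (hRadj : ∀ t ∈ R.support, t ≠ x → t ≠ u → ∀ s ∈ S, ¬ G.Adj t s) :
    ∃ D, 4 ≤ D ∧ ∀ M : G.Walk b c, IsInducedPathW (A.append (M.append B)) →
      (∀ t ∈ M.support, t ∈ S ∧ ¬ G.Adj x t) →
      ∃ (w : V) (C : G.Walk w w), IsInducedCycleW C ∧ C.length = M.length + D := by
  obtain ⟨z, B', B'', rfl, hxz, hfirst⟩ := B.exists_eq_append_first (G.Adj x)
    ⟨d, B.end_mem_support, hxd⟩
  have hB'S : ∀ t ∈ B'.support, t ∈ S := fun t ht =>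
    hBS t ((Walk.mem_support_append_iff _ _).2 (Or.inl ht))
  have hcz : c ≠ z := fun h => hxc (h ▸ hxz)
  have htrunc : ∀ M : G.Walk b c, IsInducedPathW (A.append (M.append (B'.append B''))) →
      IsInducedPathW (A.append (M.append B')) := fun M h => by
    rw [Walk.append_assoc M, Walk.append_assoc A] at h
    exact h.of_append_left
  by_cases hxA : ∃ t ∈ A.support, G.Adj x t
  · obtain ⟨D, hD, h⟩ := exists_isInducedCycleW_length_add_of_exists_adj hAS hB'S
      (hRS x R.start_mem_support) hxA hxb hxz hfirst hcz
    exact ⟨D, hD, fun M hspine => h M (htrunc M hspine)⟩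
  · push Not at hxA
    obtain ⟨D, hD, h⟩ := exists_isInducedCycleW_length_add_of_forall_not_adj hAS hB'S hxA hxz
      hfirst hcz huo hu hR hxu hRS hRadj
    exact ⟨D, hD, fun M hspine => h M (htrunc M hspine)⟩

end ClosingCycles

namespace PCP

variable {V : Type} {G : SimpleGraph V} {ℓ : ℕ} (P : PCP G ℓ)

def piece (j : ℕ) : Set V :=
  {w | (∃ i : Fin ℓ, 2 * (i : ℕ) = j ∧ w ∈ P.block i) ∨
    (∃ i : Fin ℓ, 2 * (i : ℕ) + 1 = j ∧ w ∈ (P.path i).support) ∨ (2 * ℓ = j ∧ w ∈ P.lastBlock)}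

variable {P}

theorem mem_piece_block {i : Fin ℓ} {w : V} (h : w ∈ P.block i) : w ∈ P.piece (2 * i) :=
  Or.inl ⟨i, rfl, h⟩

theorem mem_piece_path {i : Fin ℓ} {w : V} (h : w ∈ (P.path i).support) :
    w ∈ P.piece (2 * i + 1) :=
  Or.inr (Or.inl ⟨i, rfl, h⟩)

theorem mem_piece_lastBlock {w : V} (h : w ∈ P.lastBlock) : w ∈ P.piece (2 * ℓ) :=
  Or.inr (Or.inr ⟨rfl, h⟩)

theorem eq_of_mem_block {i i' : Fin ℓ} {w : V} (h : w ∈ P.block i) (h' : w ∈ P.block i') :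
    i = i' := by
  by_contra hne
  exact Set.disjoint_left.1 (P.blocks_disjoint i i' hne) h h'

theorem eq_of_mem_path {i i' : Fin ℓ} {w : V} (h : w ∈ (P.path i).support)
    (h' : w ∈ (P.path i').support) : i = i' := by
  by_contra hne
  exact P.paths_disjoint i i' hne w h h'

theorem notMem_lastBlock_of_mem_block {i : Fin ℓ} {w : V} (h : w ∈ P.block i) :
    w ∉ P.lastBlock :=
  Set.disjoint_left.1 (P.block_last_disjoint i) h

variable (P)

theorem x_mem_piece (i : Fin (ℓ + 1)) : P.x i ∈ P.piece (2 * i) := by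
  induction i using Fin.lastCases with
  | last => exact mem_piece_lastBlock P.xlast_mem
  | cast i => exact mem_piece_block (P.x_mem i)

theorem piece_subset_support (j : ℕ) : P.piece j ⊆ P.support := by
  rintro w (⟨i, -, hw⟩ | ⟨i, -, hw⟩ | ⟨-, hw⟩)
  · exact Or.inl (Or.inl (Set.mem_iUnion.2 ⟨i, hw⟩))
  · exact Or.inr (Set.mem_iUnion.2 ⟨i, hw⟩)
  · exact Or.inl (Or.inr hw)

theorem isChainDecomposition_piece : G.IsChainDecomposition P.piece where
  le_succ_of_mem := by
    rintro j j' w (⟨i, rfl, hw⟩ | ⟨i, rfl, hw⟩ | ⟨rfl, hw⟩)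
      (⟨i', rfl, hw'⟩ | ⟨i', rfl, hw'⟩ | ⟨rfl, hw'⟩)
    · rw [eq_of_mem_block hw hw']; omega
    · rcases P.block_path_inter i i' w hw hw' with ⟨rfl, -⟩ | ⟨h, -⟩ <;> omega
    · exact absurd hw' (notMem_lastBlock_of_mem_block hw)
    · rcases P.block_path_inter i' i w hw' hw with ⟨rfl, -⟩ | ⟨h, -⟩ <;> omega
    · rw [eq_of_mem_path hw hw']; omega
    · have := (P.last_path_inter i w hw' hw).1; omega
    · exact absurd hw (notMem_lastBlock_of_mem_block hw')
    · have := i'.isLt; omega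
    · omega
  exists_mem_of_adj := by
    intro j j' a b ha hb hab
    rcases P.edges_within a b (P.piece_subset_support j ha) (P.piece_subset_support j' hb) hab
      with ⟨i, ha, hb⟩ | ⟨ha, hb⟩ | ⟨i, ha, hb⟩
    exacts [⟨_, mem_piece_block ha, mem_piece_block hb⟩,
      ⟨_, mem_piece_lastBlock ha, mem_piece_lastBlock hb⟩,
      ⟨_, mem_piece_path ha, mem_piece_path hb⟩]

theorem eq_y_of_mem_piece (i : Fin ℓ) {j : ℕ} (hj : j < 2 * i + 1) {w : V} (h : w ∈ P.piece j)
    (h' : w ∈ P.piece (2 * i + 1)) : w = P.y i := by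
  have := P.isChainDecomposition_piece.le_succ_of_mem h h'
  have := i.isLt
  rcases h' with ⟨_, h', -⟩ | ⟨i', h', hw'⟩ | ⟨h', -⟩
  · omega
  · obtain rfl : i' = i := Fin.ext (by omega)
    rcases h with ⟨i'', rfl, hw⟩ | ⟨_, h, -⟩ | ⟨h, -⟩
    · rcases P.block_path_inter i'' i' w hw hw' with ⟨rfl, hw⟩ | ⟨h, -⟩
      · exact hw
      · omega
    all_goals omega
  · omega

theorem eq_x_of_mem_piece (i : Fin (ℓ + 1)) {j : ℕ} (hj : j < 2 * i) {w : V} (h : w ∈ P.piece j)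
    (h' : w ∈ P.piece (2 * i)) : w = P.x i := by
  have := P.isChainDecomposition_piece.le_succ_of_mem h h'
  have := i.isLt
  rcases h with ⟨_, h, -⟩ | ⟨i₀, rfl, hw⟩ | ⟨h, -⟩
  · omega
  · rcases h' with ⟨i₁, h', hw'⟩ | ⟨_, h', -⟩ | ⟨h', hw'⟩
    · rcases P.block_path_inter i₁ i₀ w hw' hw with ⟨rfl, -⟩ | ⟨h, rfl⟩
      · omega
      · exact congrArg P.x (Fin.ext (by simp only [Fin.val_castSucc]; omega))
    · omega
    · rw [(P.last_path_inter i₀ w hw' hw).2]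
      exact congrArg P.x (Fin.ext (by simp only [Fin.val_last]; omega))
  · omega

theorem origin_notMem_lastBlock (hℓ : 0 < ℓ) : P.origin ∉ P.lastBlock :=
  notMem_lastBlock_of_mem_block (P.x_mem ⟨0, hℓ⟩)

theorem x_castSucc_ne_y (i : Fin ℓ) : P.x i.castSucc ≠ P.y i := by
  obtain ⟨p, hp, -, hodd⟩ := P.odd_path i
  intro h
  have h0 := (Walk.isPath_iff_nil.1 ((p.isPath_copy h rfl).2 hp.1)).length_eq_zero
  rw [Walk.length_copy] at h0
  exact Nat.not_odd_zero (h0 ▸ hodd)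

theorem exists_isInducedPathW_block_even_length_add (i : Fin ℓ) (D : ℕ) :
    ∃ M : G.Walk (P.x i.castSucc) (P.y i), IsInducedPathW M ∧ (∀ w ∈ M.support, w ∈ P.block i) ∧
      0 < M.length ∧ Even (M.length + D) := by
  rcases Nat.even_or_odd D with hD | hD
  · obtain ⟨M, hM, hMS, heven⟩ := P.even_path i
    exact ⟨M, hM, hMS, Nat.pos_of_ne_zero fun h =>
      P.x_castSucc_ne_y i (Walk.eq_of_length_eq_zero h), heven.add hD⟩
  · obtain ⟨M, hM, hMS, hodd⟩ := P.odd_path i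
    exact ⟨M, hM, hMS, hodd.pos, hodd.add_odd hD⟩

theorem isInducedPathW_block_path_append (i : Fin ℓ) {z : V}
    {M : G.Walk (P.x i.castSucc) (P.y i)} {B : G.Walk (P.x i.succ) z} (hM : IsInducedPathW M)
    (hMS : ∀ w ∈ M.support, w ∈ P.block i) (hB : IsInducedPathW B)
    (hBS : ∀ w ∈ B.support, ∃ j, 2 * (i : ℕ) + 2 ≤ j ∧ w ∈ P.piece j) :
    IsInducedPathW (M.append ((P.path i).append B)) ∧
      ∀ w ∈ (M.append ((P.path i).append B)).support, ∃ j, 2 * (i : ℕ) ≤ j ∧ w ∈ P.piece j := by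
  have hS := P.isChainDecomposition_piece
  have hPB : ∀ t ∈ ((P.path i).append B).support, ∃ j, 2 * (i : ℕ) + 1 ≤ j ∧ t ∈ P.piece j := by
    intro t ht
    rcases (Walk.mem_support_append_iff _ _).1 ht with ht | ht
    · exact ⟨_, le_rfl, mem_piece_path ht⟩
    · obtain ⟨j, hj, htj⟩ := hBS t ht
      exact ⟨j, by omega, htj⟩
  refine ⟨hS.isInducedPathW_append (m := 2 * i + 1) hM ?_ (fun j hj t => P.eq_y_of_mem_piece i hj)
    (fun t ht => Or.inr ⟨2 * i, by omega, mem_piece_block (hMS t ht)⟩)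
    (fun t ht => Or.inr (hPB t ht)), fun t ht => ?_⟩
  · refine hS.isInducedPathW_append (m := 2 * i + 2) (P.path_induced i) hB
      (fun j hj t ht ht' => P.eq_x_of_mem_piece i.succ (by simp only [Fin.val_succ]; omega) ht
        (by simpa only [Fin.val_succ, mul_add] using ht'))
      (fun t ht => Or.inr ⟨_, by omega, mem_piece_path ht⟩) (fun t ht => Or.inr (hBS t ht))
  · rcases (Walk.mem_support_append_iff _ _).1 ht with ht | ht
    · exact ⟨_, le_rfl, mem_piece_block (hMS t ht)⟩
    · obtain ⟨j, hj, htj⟩ := hPB t ht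
      exact ⟨j, by omega, htj⟩

theorem exists_isInducedPathW_origin (i : Fin (ℓ + 1)) :
    ∃ A : G.Walk P.origin (P.x i), IsInducedPathW A ∧
      ∀ w ∈ A.support, w = P.x i ∨ ∃ j < 2 * (i : ℕ), w ∈ P.piece j := by
  induction i using Fin.induction with
  | zero =>
    exact ⟨Walk.nil, isInducedPathW_nil, fun w hw => Or.inl (by simpa [PCP.origin] using hw)⟩
  | succ i ih =>
    obtain ⟨A, hA, hAS⟩ := ih
    obtain ⟨M, hM, hMS, -⟩ := P.even_path i
    obtain ⟨hMP, hMPS⟩ := P.isInducedPathW_block_path_append i hM hMS isInducedPathW_nil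
      (fun t ht => by
        rw [Walk.support_nil, List.mem_singleton] at ht
        exact ht ▸ ⟨_, by simp only [Fin.val_succ]; omega, P.x_mem_piece i.succ⟩)
    rw [Walk.append_nil] at hMP hMPS
    refine ⟨A.append (M.append (P.path i)), P.isChainDecomposition_piece.isInducedPathW_append
      (m := 2 * i) hA hMP (fun j hj t => P.eq_x_of_mem_piece i.castSucc hj) hAS
      (fun t ht => Or.inr (hMPS t ht)), fun t ht => ?_⟩
    simp only [Walk.mem_support_append_iff, Fin.val_succ] at ht ⊢
    rcases ht with ht | ht | ht
    · rcases hAS t ht with rfl | ⟨j, hj, htj⟩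
      · exact Or.inr ⟨2 * i, by omega, P.x_mem_piece i.castSucc⟩
      · exact Or.inr ⟨j, by simp only [Fin.val_castSucc] at hj; omega, htj⟩
    · exact Or.inr ⟨2 * i, by omega, mem_piece_block (hMS t ht)⟩
    · exact Or.inr ⟨2 * i + 1, by omega, mem_piece_path ht⟩

theorem exists_isInducedPathW_lastBlock {y' : V} (hy' : y' ∈ P.lastBlock) (i : Fin (ℓ + 1)) :
    ∃ B : G.Walk (P.x i) y', IsInducedPathW B ∧
      ∀ w ∈ B.support, ∃ j, 2 * (i : ℕ) ≤ j ∧ w ∈ P.piece j := by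
  induction i using Fin.reverseInduction with
  | last =>
    obtain ⟨B, hB, hBS⟩ :=
      exists_isInducedPathW_of_connected_induce P.last_connected P.xlast_mem hy'
    exact ⟨B, hB, fun w hw => ⟨2 * ℓ, by simp, mem_piece_lastBlock (hBS w hw)⟩⟩
  | cast i ih =>
    obtain ⟨B, hB, hBS⟩ := ih
    obtain ⟨M, hM, hMS, -⟩ := P.even_path i
    exact ⟨_, P.isInducedPathW_block_path_append i hM hMS hB (by simpa [mul_add] using hBS)⟩

theorem exists_isInducedPathW_through_block (i : Fin ℓ) {y' : V} (hy' : y' ∈ P.lastBlock) :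
    ∃ (A : G.Walk P.origin (P.x i.castSucc)) (B : G.Walk (P.y i) y'),
      (∀ w ∈ A.support, w ∈ P.support) ∧ (∀ w ∈ B.support, w ∈ P.support) ∧
      ∀ M : G.Walk (P.x i.castSucc) (P.y i), IsInducedPathW M →
        (∀ w ∈ M.support, w ∈ P.block i) → IsInducedPathW (A.append (M.append B)) := by
  obtain ⟨A, hA, hAS⟩ := P.exists_isInducedPathW_origin i.castSucc
  obtain ⟨B, hB, hBS⟩ := P.exists_isInducedPathW_lastBlock hy' i.succ
  refine ⟨A, (P.path i).append B, fun w hw => ?_, fun w hw => ?_, fun M hM hMS => ?_⟩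
  · rcases hAS w hw with rfl | ⟨j, -, hj⟩
    exacts [P.piece_subset_support _ (P.x_mem_piece _), P.piece_subset_support _ hj]
  · rcases (Walk.mem_support_append_iff _ _).1 hw with hw | hw
    · exact P.piece_subset_support _ (mem_piece_path hw)
    · obtain ⟨j, -, hj⟩ := hBS w hw
      exact P.piece_subset_support _ hj
  · obtain ⟨hMB, hMBS⟩ := P.isInducedPathW_block_path_append i hM hMS hB
      (by simpa [mul_add] using hBS)
    exact P.isChainDecomposition_piece.isInducedPathW_append (m := 2 * i) hA hMB
      (fun j hj t => P.eq_x_of_mem_piece i.castSucc hj) hAS (fun t ht => Or.inr (hMBS t ht))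

end PCP

theorem neighbor_in_last_block_neighbor_everywhere_general (V : Type)
    (G : SimpleGraph V)
    (heven : ∀ n : ℕ, 6 ≤ n → Even n → NoInducedCycle G n)
    (v : V) (k ℓ : ℕ) (hk : 1 ≤ k) (P : PCP G ℓ)
    (hroot : P.IsRootedInLevel v k)
    (x' : V) (hx' : x' ∈ level G v (k - 1))
    (hnb : ∃ w ∈ P.lastBlock, G.Adj x' w) :
    ∀ i : Fin ℓ, ∃ w ∈ P.block i, G.Adj x' w := by
  obtain ⟨m, rfl⟩ : ∃ m, k = m + 1 := ⟨k - 1, by omega⟩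
  obtain ⟨hlev, u', hu', hu'o, hu'P⟩ := hroot
  rw [Nat.add_sub_cancel] at hx' hu'
  obtain ⟨y', hy', hx'y'⟩ := hnb
  intro i
  by_contra! hno
  have hxu : x' ≠ u' := by
    rintro rfl
    exact hu'P y' (P.piece_subset_support _ (PCP.mem_piece_lastBlock hy'))
      (fun h => P.origin_notMem_lastBlock i.pos (h ▸ hy')) hx'y'
  obtain ⟨R, hR, hRP, hRadj⟩ := exists_isInducedPathW_avoiding_level_succ hlev hx' hu'
  obtain ⟨A, B, hAP, hBP, hspine⟩ := P.exists_isInducedPathW_through_block i hy'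
  obtain ⟨D, hD, hcycle⟩ := exists_isInducedCycleW_length_add hAP hBP (hno _ (P.x_mem i))
    (hno _ (P.y_mem i)) hx'y' hu'o (fun t ht h => not_not.1 fun hne => hu'P t ht hne h) hR hxu
    hRP hRadj
  obtain ⟨M, hM, hMS, hMpos, hMD⟩ := P.exists_isInducedPathW_block_even_length_add i D
  obtain ⟨w, C, hC, hClen⟩ := hcycle M (hspine M hM hMS) fun t ht =>
    ⟨P.piece_subset_support _ (PCP.mem_piece_block (hMS t ht)), hno t (hMS t ht)⟩
  have h6 : 6 ≤ C.length := by obtain ⟨r, hr⟩ := hMD; omega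
  exact not_nonempty_iff.2 (heven _ h6 (hClen ▸ hMD)) hC.nonempty_embedding

/-- Let `G ∈ C_{3,2k≥6}` and let `P` be a rooted PCP of order `ℓ` in the
level `N_k` (`k ≥ 1`). If `x' ∈ N_{k-1}` has a neighbor in the last block `H`, then `x'`
has a neighbor in every regular block `G_i`. -/
theorem neighbor_in_last_block_neighbor_everywhere (V : Type) [Fintype V]
    (G : SimpleGraph V) (h3 : G.CliqueFree 3)
    (heven : ∀ n : ℕ, 6 ≤ n → Even n → NoInducedCycle G n)
    (v : V) (k ℓ : ℕ) (hk : 1 ≤ k) (P : PCP G ℓ)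
    (hroot : P.IsRootedInLevel v k)
    (x' : V) (hx' : x' ∈ level G v (k - 1))
    (hnb : ∃ w ∈ P.lastBlock, G.Adj x' w) :
    ∀ i : Fin ℓ, ∃ w ∈ P.block i, G.Adj x' w :=
  neighbor_in_last_block_neighbor_everywhere_general V G heven v k ℓ hk P hroot x' hx' hnb
end

section
/- Let G be a triangle-free graph containing an induced cycle C of length 5, and let S ⊆ V(G) be a minimal dominating set of C that is disjoint from the vertex set of C. In the graph G' obtained from G by deleting all edges with both endpoints in S, for every vertex t ∈ S there exists a vertex t' ∈ S such that G' contains an induced t t'-path of length 4 all of whose internal vertices lie on C, and an induced t t'-path of length 3 or 5 all of whose internal vertices lie on C. -/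
open SimpleGraph

/-! Minimality gives `t` a private neighbour `c₀` on the cycle `c₀ c₁ c₂ c₃ c₄`. Since `t` cannot
see both of the adjacent vertices `c₂, c₃`, after rotating or reflecting the cycle `t` sees `c₀`
but none of `c₁, c₂, c₄`. A vertex `t' ∈ S` dominating `c₂` is then different from `t`, misses `c₀`
by privacy and misses `c₁, c₃` by triangle-freeness. So `t c₀ c₁ c₂ t'` is induced, and so is
`t c₃ c₂ t'`, `t c₀ c₄ t'` or `t c₀ c₄ c₃ c₂ t'`, according to whether `t ∼ c₃`, `t' ∼ c₄` or
neither. The cycle avoids `S`, so removing the edges inside `S` only removes the chord `t t'`. -/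

namespace SimpleGraph

variable {V : Type} {G : SimpleGraph V}

@[simp]
lemma isInducedPathW_nil {u : V} : IsInducedPathW (Walk.nil : G.Walk u u) :=
  ⟨Walk.IsPath.nil, by simp⟩

@[simp]
lemma isInducedPathW_cons_iff {u v w : V} (h : G.Adj u v) (p : G.Walk v w) :
    IsInducedPathW (.cons h p) ↔
      IsInducedPathW p ∧ u ∉ p.support ∧ ∀ x ∈ p.support, G.Adj u x → x = v := by
  simp only [IsInducedPathW, Walk.cons_isPath_iff, Walk.support_cons, Walk.edges_cons,
    List.mem_cons]
  constructor
  · rintro ⟨⟨hp, hu⟩, hind⟩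
    refine ⟨⟨hp, fun a ha b hb hab => ?_⟩, hu, fun x hx hux => ?_⟩
    · rcases hind a (.inr ha) b (.inr hb) hab with he | he
      · have hmem : u ∈ s(a, b) := he ▸ Sym2.mem_mk_left u v
        rcases Sym2.mem_iff.1 hmem with rfl | rfl <;> contradiction
      · exact he
    · rcases hind u (.inl rfl) x (.inr hx) hux with he | he
      · exact Sym2.congr_right.1 he
      · exact absurd (p.fst_mem_support_of_mem_edges he) hu
  · rintro ⟨⟨hp, hind⟩, hu, hadj⟩
    refine ⟨⟨hp, hu⟩, ?_⟩
    rintro a (rfl | ha) b (rfl | hb) hab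
    · exact absurd rfl hab.ne
    · exact .inl (by rw [hadj b hb hab])
    · exact .inl (by rw [hadj a ha hab.symm, Sym2.eq_swap])
    · exact .inr (hind a ha b hb hab)

lemma CliqueFree.not_adj_of_adj_of_adj (h3 : G.CliqueFree 3) {a b c : V} (hab : G.Adj a b)
    (hbc : G.Adj b c) : ¬G.Adj a c := fun hac => by
  classical
  exact h3 {a, b, c} (is3Clique_triple_iff.2 ⟨hab, hac, hbc⟩)

lemma deleteEdges_pairs_adj {S : Set V} {x y : V} :
    (G.deleteEdges {e : Sym2 V | ∃ a ∈ S, ∃ b ∈ S, e = s(a, b)}).Adj x y ↔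
      G.Adj x y ∧ ¬(x ∈ S ∧ y ∈ S) := by
  rw [deleteEdges_adj]
  refine and_congr_right fun _ => not_congr ⟨?_, fun ⟨hx, hy⟩ => ⟨x, hx, y, hy, rfl⟩⟩
  rintro ⟨a, ha, b, hb, hab⟩
  rcases Sym2.eq_iff.1 hab with ⟨rfl, rfl⟩ | ⟨rfl, rfl⟩
  exacts [⟨ha, hb⟩, ⟨hb, ha⟩]

def Embedding.deleteEdgesOfDisjoint {W : Type} {F : SimpleGraph W} (f : F ↪g G) {S : Set V}
    (hf : ∀ w, f w ∉ S) : F ↪g G.deleteEdges {e : Sym2 V | ∃ a ∈ S, ∃ b ∈ S, e = s(a, b)} :=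
  { f.toEmbedding with
    map_rel_iff' := by
      intro a b
      rw [deleteEdges_pairs_adj]
      simp [hf] }

@[simp]
lemma Embedding.deleteEdgesOfDisjoint_apply {W : Type} {F : SimpleGraph W} (f : F ↪g G)
    {S : Set V} (hf : ∀ w, f w ∉ S) (w : W) : f.deleteEdgesOfDisjoint hf w = f w :=
  rfl

def cycleGraph.rotate {n : ℕ} (j : Fin (n + 2)) : cycleGraph (n + 2) ≃g cycleGraph (n + 2) :=
  ⟨Equiv.addLeft j, by simp [cycleGraph_adj]⟩

def cycleGraph.reflect {n : ℕ} (j : Fin (n + 2)) : cycleGraph (n + 2) ≃g cycleGraph (n + 2) :=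
  ⟨Equiv.subLeft j, by simp [cycleGraph_adj, or_comm]⟩

lemma exists_private_neighbor_of_minimal {B S : Set V}
    (hdom : ∀ u ∈ B, ∃ s ∈ S, G.Adj s u) (hmin : ∀ S' ⊂ S, ∃ u ∈ B, ∀ s ∈ S', ¬G.Adj s u)
    {t : V} (ht : t ∈ S) : ∃ u ∈ B, G.Adj t u ∧ ∀ s ∈ S, G.Adj s u → s = t := by
  obtain ⟨u, hu, hpriv⟩ := hmin (S \ {t}) (Set.sdiff_singleton_ssubset.2 ht)
  have hpriv' : ∀ s ∈ S, G.Adj s u → s = t := fun s hs hsu => by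
    by_contra hst
    exact hpriv s ⟨hs, hst⟩ hsu
  obtain ⟨s, hs, hsu⟩ := hdom u hu
  exact ⟨u, hu, hpriv' s hs hsu ▸ hsu, hpriv'⟩

lemma CliqueFree.exists_cycleGraph_iso_not_adj (h3 : G.CliqueFree 3) (f : cycleGraph 5 ↪g G)
    (t : V) (j : Fin 5) : ∃ σ : cycleGraph 5 ≃g cycleGraph 5, σ 0 = j ∧ ¬G.Adj t (f (σ 2)) := by
  by_cases ht : G.Adj t (f (j + 2))
  · refine ⟨cycleGraph.reflect j, by simp [cycleGraph.reflect], fun ht' => ?_⟩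
    refine h3.not_adj_of_adj_of_adj ht ?_ ht'
    rw [f.map_adj_iff, cycleGraph_adj]
    simp only [cycleGraph.reflect, RelIso.coe_fn_mk, Equiv.subLeft_apply]
    exact .inr (by rw [show j - 2 - (j + 2) = -4 by abel]; decide)
  · exact ⟨cycleGraph.rotate j, by simp [cycleGraph.rotate], by simpa [cycleGraph.rotate] using ht⟩

theorem exists_inducedPathW_four_and_three_or_five (h3 : G.CliqueFree 3)
    (c : cycleGraph 5 ↪g G) {C : Set V} (hC : ∀ i, c i ∈ C) {t t' : V} (ht : t ∉ C)
    (ht' : t' ∉ C) (htt' : ¬G.Adj t t') (ht0 : G.Adj t (c 0)) (ht2 : ¬G.Adj t (c 2))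
    (ht'0 : ¬G.Adj t' (c 0)) (ht'2 : G.Adj t' (c 2)) :
    (∃ p : G.Walk t t', IsInducedPathW p ∧ (∀ w ∈ p.support, w = t ∨ w = t' ∨ w ∈ C) ∧
        p.length = 4) ∧
      ∃ q : G.Walk t t', IsInducedPathW q ∧ (∀ w ∈ q.support, w = t ∨ w = t' ∨ w ∈ C) ∧
        (q.length = 3 ∨ q.length = 5) := by
  have hc : ∀ i j : Fin 5, G.Adj (c i) (c j) ↔ i - j = 1 ∨ j - i = 1 := fun i j => by
    rw [c.map_adj_iff, cycleGraph_adj]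
  have ht1 : ¬G.Adj t (c 1) := h3.not_adj_of_adj_of_adj ht0 ((hc 0 1).2 (by decide))
  have ht4 : ¬G.Adj t (c 4) := h3.not_adj_of_adj_of_adj ht0 ((hc 0 4).2 (by decide))
  have ht'1 : ¬G.Adj t' (c 1) := h3.not_adj_of_adj_of_adj ht'2 ((hc 2 1).2 (by decide))
  have ht'3 : ¬G.Adj t' (c 3) := h3.not_adj_of_adj_of_adj ht'2 ((hc 2 3).2 (by decide))
  have hne : ∀ i, t ≠ c i ∧ c i ≠ t ∧ t' ≠ c i ∧ c i ≠ t' := fun i =>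
    ⟨fun h => ht (h ▸ hC i), fun h => ht (h ▸ hC i), fun h => ht' (h ▸ hC i),
      fun h => ht' (h ▸ hC i)⟩
  have htt'_ne : t ≠ t' := fun h => ht'0 (h ▸ ht0)
  refine ⟨⟨.cons ht0 (.cons ((hc 0 1).2 (by decide)) (.cons ((hc 1 2).2 (by decide))
    (.cons ht'2.symm .nil))), ?_, by simp [hC], rfl⟩, ?_⟩
  · simp +decide [adj_comm, *]
  by_cases ht3 : G.Adj t (c 3)
  · refine ⟨.cons ht3 (.cons ((hc 3 2).2 (by decide)) (.cons ht'2.symm .nil)), ?_,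
      by simp [hC], .inl rfl⟩
    simp +decide [adj_comm, *]
  by_cases ht'4 : G.Adj t' (c 4)
  · refine ⟨.cons ht0 (.cons ((hc 0 4).2 (by decide)) (.cons ht'4.symm .nil)), ?_,
      by simp [hC], .inl rfl⟩
    simp +decide [adj_comm, *]
  refine ⟨.cons ht0 (.cons ((hc 0 4).2 (by decide)) (.cons ((hc 4 3).2 (by decide))
    (.cons ((hc 3 2).2 (by decide)) (.cons ht'2.symm .nil)))), ?_, by simp [hC], .inr rfl⟩
  simp +decide [adj_comm, *]

end SimpleGraph

/-- Let `G` be triangle-free with an induced 5-cycle `C` (given by the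
embedding `f`), and let `S` be a minimal dominating set of `C` disjoint from `C`. In the
graph obtained by deleting all edges with both endpoints in `S`, for every `t ∈ S` there
is `t' ∈ S` with an induced `t t'`-path of length 4 and an induced `t t'`-path of length
3 or 5, both with all internal vertices on `C`. -/
theorem dominating_set_parity_paths (V : Type) (G : SimpleGraph V)
    (h3 : G.CliqueFree 3) (f : cycleGraph 5 ↪g G) (S : Set V)
    (hdisj : ∀ s ∈ S, s ∉ Set.range fun i => f i)
    (hdom : ∀ u ∈ Set.range (fun i => f i), ∃ s ∈ S, G.Adj s u)
    (hmin : ∀ S' ⊂ S, ∃ u ∈ Set.range (fun i => f i), ∀ s ∈ S', ¬ G.Adj s u) :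
    ∀ t ∈ S, ∃ t' ∈ S,
      (∃ p : (G.deleteEdges {e : Sym2 V | ∃ a ∈ S, ∃ b ∈ S, e = s(a, b)}).Walk t t',
        IsInducedPathW p ∧
        (∀ w ∈ p.support, w = t ∨ w = t' ∨ w ∈ Set.range fun i => f i) ∧
        p.length = 4) ∧
      (∃ q : (G.deleteEdges {e : Sym2 V | ∃ a ∈ S, ∃ b ∈ S, e = s(a, b)}).Walk t t',
        IsInducedPathW q ∧
        (∀ w ∈ q.support, w = t ∨ w = t' ∨ w ∈ Set.range fun i => f i) ∧
        (q.length = 3 ∨ q.length = 5)) := by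
  intro t ht
  have hfS : ∀ i, f i ∉ S := fun i hi => hdisj _ hi ⟨i, rfl⟩
  obtain ⟨-, ⟨j, rfl⟩, htj, hpriv⟩ := exists_private_neighbor_of_minimal hdom hmin ht
  obtain ⟨σ, hσ0, ht2⟩ := h3.exists_cycleGraph_iso_not_adj f t j
  obtain ⟨t', ht'S, ht'2⟩ := hdom (f (σ 2)) ⟨_, rfl⟩
  have ht't : t' ≠ t := fun h => ht2 (h ▸ ht'2)
  have ht'0 : ¬G.Adj t' (f j) := fun h => ht't (hpriv t' ht'S h)
  let c := σ.toEmbedding.trans (Embedding.deleteEdgesOfDisjoint f hfS)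
  refine ⟨t', ht'S, exists_inducedPathW_four_and_three_or_five (h3.anti (deleteEdges_le _)) c
    (C := Set.range fun i => f i) (fun i => ⟨σ i, rfl⟩) (hdisj t ht) (hdisj t' ht'S)
    ?_ ?_ ?_ ?_ ?_⟩ <;> simp [-deleteEdges_adj, deleteEdges_pairs_adj, c, *]
end

section
/- Suppose c' is a positive integer such that every graph containing no triangle, no induced cycle of length 5, and no induced cycle of even length at least 6 has chromatic number less than c'. Let G be a graph containing no triangle and no induced cycle of even length at least 6, let v be a vertex of G and (N_0, N_1, …) be the v-levelling. For every k ≥ 1, if S ⊆ N_{k−1} is a stable set, then χ(N(S) ∩ N_k) ≤ 2c'. -/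
open SimpleGraph

/-!
`N(S) ∩ N_k` contains no induced `C₅`, so its chromatic number is already less than `c'`. Suppose
`a₀ … a₄` is an induced `C₅` there and pick `σ_y ∈ S` adjacent to `a_y`. As `G` is
triangle-free, `σ_y` sees `a_y` and at most `a_{y+2}`, `a_{y+3}` besides; a finite check of these
patterns gives `s, s' ∈ S` and `x` with `s ∼ a_x`, `s' ∼ a_{x+2}`, `s ≁ a_{x+2}`, `s' ≁ a_x`.
Then `C₅ ∪ {s, s'}` contains an induced `s`–`s'` path of length `4` and one of length `3` or `5`,
both with interior in `N_k`. A shortest `s`–`s'` path through `N_0 ∪ … ∪ N_{k-2}` has no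
edges to `N_k`, so it closes both into holes, of lengths of different parity and at least `5`:
one of them is an even hole of length at least `6`.
-/

namespace SimpleGraph

variable {V W : Type} {G : SimpleGraph V}

def IsInducedPathSeq (G : SimpleGraph V) (p : ℕ → V) (n : ℕ) : Prop :=
  ∀ i ≤ n, ∀ j ≤ n, (p i = p j ↔ i = j) ∧ (G.Adj (p i) (p j) ↔ i + 1 = j ∨ j + 1 = i)

instance [DecidableEq V] [DecidableRel G.Adj] (p : ℕ → V) (n : ℕ) :
    Decidable (G.IsInducedPathSeq p n) := by
  unfold IsInducedPathSeq; infer_instance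

lemma isInducedPathSeq_of_le {p : ℕ → V} {n : ℕ}
    (h : ∀ i j, i ≤ j → j ≤ n → (p i = p j ↔ i = j) ∧ (G.Adj (p i) (p j) ↔ i + 1 = j)) :
    G.IsInducedPathSeq p n := by
  intro i hi j hj
  rcases le_total i j with hij | hji
  · rw [(h i j hij hj).1, (h i j hij hj).2]
    omega
  · rw [eq_comm, G.adj_comm, (h j i hji hi).1, (h j i hji hi).2]
    omega

lemma IsInducedPathSeq.map {H : SimpleGraph W} (f : H ↪g G) {p : ℕ → W} {n : ℕ}
    (hp : H.IsInducedPathSeq p n) : G.IsInducedPathSeq (f ∘ p) n := fun i hi j hj => by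
  simpa only [Function.comp_apply, f.injective.eq_iff, f.map_adj_iff] using hp i hi j hj

def IsInducedPathThrough (G : SimpleGraph V) (X : Set V) (s s' : V) (p : ℕ → V) (n : ℕ) :
    Prop :=
  G.IsInducedPathSeq p n ∧ p 0 = s ∧ p n = s' ∧ ∀ m < n, 0 < m → p m ∈ X

instance [DecidableEq V] [DecidableRel G.Adj] (X : Set V) [∀ x, Decidable (x ∈ X)]
    (s s' : V) (p : ℕ → V) (n : ℕ) : Decidable (G.IsInducedPathThrough X s s' p n) := by
  unfold IsInducedPathThrough; infer_instance

lemma IsInducedPathThrough.map {H : SimpleGraph W} (f : H ↪g G) {X : Set W} {s s' : W}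
    {p : ℕ → W} {n : ℕ} (hp : H.IsInducedPathThrough X s s' p n) :
    G.IsInducedPathThrough (f '' X) (f s) (f s') (f ∘ p) n :=
  ⟨hp.1.map f, congrArg f hp.2.1, congrArg f hp.2.2.1,
    fun m hm hm0 => Set.mem_image_of_mem f (hp.2.2.2 m hm hm0)⟩

lemma IsInducedPathThrough.mono {X Y : Set V} {s s' : V} {p : ℕ → V} {n : ℕ}
    (hp : G.IsInducedPathThrough X s s' p n) (hXY : X ⊆ Y) :
    G.IsInducedPathThrough Y s s' p n :=
  ⟨hp.1, hp.2.1, hp.2.2.1, fun m hm hm0 => hXY (hp.2.2.2 m hm hm0)⟩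

lemma cycleGraph_adj_iff_val {n : ℕ} (hn : 2 ≤ n) {u w : Fin n} (huw : u ≤ w) :
    (cycleGraph n).Adj u w ↔ (u : ℕ) + 1 = w ∨ ((u : ℕ) = 0 ∧ (w : ℕ) + 1 = n) := by
  obtain ⟨m, rfl⟩ : ∃ m, n = m + 1 + 1 := ⟨n - 2, by omega⟩
  rw [cycleGraph_adj, sub_eq_iff_eq_add', sub_eq_iff_eq_add',
    Fin.ext_iff, Fin.ext_iff, Fin.val_add_one, Fin.val_add_one]
  rw [Fin.le_iff_val_le_val] at huw
  split_ifs with h₁ h₂ h₂ <;> simp only [Fin.ext_iff, Fin.val_last] at h₁ h₂ <;> omega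

lemma nonempty_cycleGraph_embedding_of {n : ℕ} (hn : 3 ≤ n) (c : ℕ → V)
    (h : ∀ i j, i ≤ j → j < n → (c i = c j ↔ i = j) ∧
      (G.Adj (c i) (c j) ↔ i + 1 = j ∨ (i = 0 ∧ j + 1 = n))) :
    Nonempty (cycleGraph n ↪g G) := by
  have key (u w : Fin n) : (c u = c w ↔ u = w) ∧ (G.Adj (c u) (c w) ↔ (cycleGraph n).Adj u w) := by
    rcases le_total u w with huw | hwu
    · rw [cycleGraph_adj_iff_val (by omega) huw, Fin.ext_iff]
      exact h u w huw w.2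
    · rw [eq_comm, G.adj_comm, (cycleGraph n).adj_comm, cycleGraph_adj_iff_val (by omega) hwu,
        Fin.ext_iff, eq_comm (a := (u : ℕ))]
      exact h w u hwu u.2
  exact ⟨⟨⟨fun u => c u, fun u w huw => (key u w).1.mp huw⟩, (key _ _).2⟩⟩

lemma nonempty_cycleGraph_embedding_of_paths {e g : ℕ → V} {l q : ℕ} (hl : 2 ≤ l) (hq : 2 ≤ q)
    (he : G.IsInducedPathSeq e l) (hg : G.IsInducedPathSeq g q) (h₀ : e 0 = g 0)
    (hlq : e l = g q)
    (hsep : ∀ i < l, ∀ j < q, 0 < i → 0 < j → e i ≠ g j ∧ ¬ G.Adj (e i) (g j)) :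
    Nonempty (cycleGraph (l + q) ↪g G) := by
  refine nonempty_cycleGraph_embedding_of (by omega)
    (fun m => if m ≤ l then e m else g (l + q - m)) fun i j hij hj => ?_
  by_cases hjl : j ≤ l
  · simp only [if_pos hjl, if_pos (hij.trans hjl)]
    rw [(he i (by omega) j hjl).1, (he i (by omega) j hjl).2]
    omega
  simp only [if_neg hjl]
  by_cases hil : i ≤ l
  · simp only [if_pos hil]
    rcases Nat.eq_zero_or_pos i with rfl | hi0
    · rw [h₀, (hg 0 (by omega) _ (by omega)).1, (hg 0 (by omega) _ (by omega)).2]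
      omega
    rcases hil.eq_or_lt with rfl | hil'
    · rw [hlq, (hg q le_rfl _ (by omega)).1, (hg q le_rfl _ (by omega)).2]
      omega
    obtain ⟨hne, hnadj⟩ := hsep i hil' (l + q - j) (by omega) hi0 (by omega)
    simp only [hne, hnadj, false_iff]
    omega
  · simp only [if_neg hil]
    rw [(hg _ (by omega) _ (by omega)).1, (hg _ (by omega) _ (by omega)).2]
    omega

lemma Walk.dist_getVert_of_length_eq_dist {u w : V} {p : G.Walk u w}
    (hp : p.length = G.dist u w) {i j : ℕ} (hij : i ≤ j) (hj : j ≤ p.length) :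
    G.dist (p.getVert i) (p.getVert j) = j - i := by
  have hsub : ((p.drop i).take (j - i)).IsSubwalk p :=
    (Walk.isSubwalk_take _ _).trans (Walk.isSubwalk_drop _ _)
  have := length_eq_dist_of_subwalk hp hsub
  rw [Walk.take_length, Walk.drop_length, Walk.drop_getVert, Nat.add_sub_cancel' hij] at this
  omega

lemma Walk.isInducedPathSeq_getVert {u w : V} {p : G.Walk u w}
    (hp : p.length = G.dist u w) : G.IsInducedPathSeq p.getVert p.length := by
  refine isInducedPathSeq_of_le fun i j hij hj => ?_
  have hd := Walk.dist_getVert_of_length_eq_dist hp hij hj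
  refine ⟨⟨fun h => ?_, fun h => h ▸ rfl⟩, ?_⟩
  · rw [h, dist_self] at hd
    omega
  · rw [← dist_eq_one_iff_adj, hd]
    omega

end SimpleGraph

/-- The possible neighbourhoods on an induced `C₅` of a vertex adjacent to its vertex `w`, in a
triangle-free graph. -/
def c5Trace (w : Fin 5) (c : Bool × Bool) (z : Fin 5) : Prop :=
  z = w ∨ (c.1 ∧ z = w + 2) ∨ (c.2 ∧ z = w + 3)

instance (w : Fin 5) (c : Bool × Bool) : DecidablePred (c5Trace w c) := fun _ => by
  unfold c5Trace; infer_instance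

lemma exists_adj_iff_c5Trace {V : Type} {G : SimpleGraph V} (h3 : G.CliqueFree 3)
    (a : cycleGraph 5 ↪g G) {s : V} {w : Fin 5} (hw : G.Adj s (a w)) :
    ∃ c, ∀ z, G.Adj s (a z) ↔ c5Trace w c z := by
  classical
  have hcyc : ∀ y : Fin 5, (cycleGraph 5).Adj y (y + 1) := by decide
  have hsucc : ∀ y, G.Adj s (a y) → ¬ G.Adj s (a (y + 1)) := fun y h₁ h₂ =>
    h3 {s, a y, a (y + 1)} <| is3Clique_triple_iff.mpr ⟨h₁, h₂, a.map_adj_iff.mpr (hcyc y)⟩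
  have h1 := hsucc w hw
  have h4 : ¬ G.Adj s (a (w + 4)) := fun h =>
    hsucc _ h (by rwa [add_assoc, show (4 + 1 : Fin 5) = 0 from rfl, add_zero])
  refine ⟨(decide (G.Adj s (a (w + 2))), decide (G.Adj s (a (w + 3)))), fun z => ?_⟩
  obtain ⟨r, rfl⟩ : ∃ r, z = w + r := ⟨z - w, by abel⟩
  fin_cases r <;> simp [c5Trace, hw, h1, h4]

lemma exists_c5Trace_crossing (t : Fin 5 → Bool × Bool) :
    ∃ x i j : Fin 5, c5Trace i (t i) x ∧ ¬ c5Trace i (t i) (x + 2) ∧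
      c5Trace j (t j) (x + 2) ∧ ¬ c5Trace j (t j) x := by
  revert t; decide +kernel

/-- An induced `C₅` on the vertices `inl y` and two nonadjacent vertices `inr false`, `inr true`
with neighbourhoods `A`, `B` on the cycle. -/
def c5WithTwo (A B : Fin 5 → Prop) : SimpleGraph (Fin 5 ⊕ Bool) where
  Adj
    | .inl y, .inl z => (cycleGraph 5).Adj y z
    | .inl y, .inr false | .inr false, .inl y => A y
    | .inl y, .inr true | .inr true, .inl y => B y
    | .inr _, .inr _ => False
  symm := ⟨by
    rintro (y | _ | _) (z | _ | _) h
    exacts [h.symm, h, h, h, h, h, h, h, h]⟩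
  loopless := ⟨by
    rintro (y | _ | _) h
    exacts [(cycleGraph 5).loopless.irrefl y h, h, h]⟩

instance (A B : Fin 5 → Prop) [DecidablePred A] [DecidablePred B] :
    DecidableRel (c5WithTwo A B).Adj
  | .inl y, .inl z => inferInstanceAs (Decidable ((cycleGraph 5).Adj y z))
  | .inl y, .inr false => inferInstanceAs (Decidable (A y))
  | .inl y, .inr true => inferInstanceAs (Decidable (B y))
  | .inr false, .inl y => inferInstanceAs (Decidable (A y))
  | .inr true, .inl y => inferInstanceAs (Decidable (B y))
  | .inr false, .inr false | .inr false, .inr true | .inr true, .inr false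
  | .inr true, .inr true => isFalse id

def c5WithTwo.embedding {V : Type} {G : SimpleGraph V} (a : cycleGraph 5 ↪g G)
    {A B : Fin 5 → Prop} {s s' : V} (hA : ∀ y, G.Adj s (a y) ↔ A y)
    (hB : ∀ y, G.Adj s' (a y) ↔ B y) (hs : ∀ y, a y ≠ s) (hs' : ∀ y, a y ≠ s')
    (hne : s ≠ s') (hnadj : ¬ G.Adj s s') : c5WithTwo A B ↪g G where
  toFun := Sum.elim a fun c => bif c then s' else s
  inj' := by
    rintro (y | _ | _) (z | _ | _) h <;> simp_all [a.injective.eq_iff, eq_comm]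
  map_rel_iff' := by
    rintro (y | _ | _) (z | _ | _)
    exacts [a.map_adj_iff, (G.adj_comm _ _).trans (hA y), (G.adj_comm _ _).trans (hB y), hA z,
      iff_of_false (G.loopless.irrefl s) id, iff_of_false hnadj id, hB z,
      iff_of_false (fun h => hnadj h.symm) id, iff_of_false (G.loopless.irrefl s') id]

def listPath (l : List (Fin 5 ⊕ Bool)) (m : ℕ) : Fin 5 ⊕ Bool := l.getD m (.inr false)

/-- The odd path is the first candidate when `inr false ∼ inl (x + 3)`, the second when
`inr true ∼ inl (x + 4)`, and the third otherwise. -/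
lemma c5WithTwo_crossing_paths (x : Fin 5) (c c' : Bool × Bool)
    (hc : ¬ c5Trace x c (x + 2)) (hc' : ¬ c5Trace (x + 2) c' x) :
    (c5WithTwo (c5Trace x c) (c5Trace (x + 2) c')).IsInducedPathThrough {u | u.isLeft}
      (.inr false) (.inr true)
      (listPath [.inr false, .inl x, .inl (x + 1), .inl (x + 2), .inr true]) 4 ∧
    ∃ l ∈ [[.inr false, .inl (x + 3), .inl (x + 2), .inr true],
        [.inr false, .inl x, .inl (x + 4), .inr true],
        [.inr false, .inl x, .inl (x + 4), .inl (x + 3), .inl (x + 2), .inr true]],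
      (c5WithTwo (c5Trace x c) (c5Trace (x + 2) c')).IsInducedPathThrough {u | u.isLeft}
        (.inr false) (.inr true) (listPath l) (l.length - 1) := by
  revert x c c'; decide +kernel

section Levelling

variable {V : Type} {G : SimpleGraph V} {v : V} {d : ℕ}

lemma ne_and_not_adj_of_mem_level_succ {x y : V} (hx : x ∈ level G v (d + 1))
    (hy : G.dist v y < d) : x ≠ y ∧ ¬ G.Adj x y := by
  refine ⟨fun h => by rw [← h, hx.2] at hy; omega, fun h => ?_⟩
  have := h.symm.diff_dist_adj (u := v)
  rw [hx.2] at this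
  omega

lemma exists_walk_support_closer {t : V} (ht : t ∈ level G v d) :
    ∃ p : G.Walk v t, ∀ x ∈ p.support, x = t ∨ (G.Reachable v x ∧ G.dist v x < d) := by
  obtain ⟨p, hp⟩ := ht.1.exists_walk_length_eq_dist
  refine ⟨p, fun x hx => ?_⟩
  obtain ⟨m, rfl, hm⟩ := Walk.mem_support_iff_exists_getVert.mp hx
  rcases hm.eq_or_lt with rfl | hm
  · exact Or.inl p.getVert_length
  · have := Walk.dist_getVert_of_length_eq_dist hp (Nat.zero_le m) hm.le
    rw [Walk.getVert_zero] at this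
    exact Or.inr ⟨⟨p.take m⟩, by rw [this, ← ht.2, ← hp]; omega⟩

lemma exists_isInducedPathThrough_closer {s s' : V} (hs : s ∈ level G v d)
    (hs' : s' ∈ level G v d) (hne : s ≠ s') (hnadj : ¬ G.Adj s s') :
    ∃ q g, 2 ≤ q ∧
      G.IsInducedPathThrough {x | G.Reachable v x ∧ G.dist v x < d} s s' g q := by
  set Y := {x | x = s ∨ x = s' ∨ (G.Reachable v x ∧ G.dist v x < d)}
  obtain ⟨p, hp⟩ := exists_walk_support_closer hs
  obtain ⟨p', hp'⟩ := exists_walk_support_closer hs'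
  have hY : ∀ x ∈ (p.reverse.append p').support, x ∈ Y := by
    intro x hx
    rcases (Walk.mem_support_append_iff _ _).mp hx with hx | hx
    · rcases hp x (by simpa using hx) with h | h <;> simp [Y, h]
    · rcases hp' x hx with h | h <;> simp [Y, h]
  have hreach : (G.induce Y).Reachable ⟨s, by simp [Y]⟩ ⟨s', by simp [Y]⟩ :=
    ⟨(p.reverse.append p').induce Y hY⟩
  obtain ⟨r, hr⟩ := hreach.exists_walk_length_eq_dist
  have hind := (Walk.isInducedPathSeq_getVert hr).map (Embedding.induce Y)
  refine ⟨r.length, _, ?_, hind, by simp, by simp, fun m hm hm0 => ?_⟩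
  · have h0 : r.length ≠ 0 := by
      rw [hr, Ne, hreach.dist_eq_zero_iff]
      simpa using hne
    have h1 : r.length ≠ 1 := by
      rw [hr, Ne, dist_eq_one_iff_adj]
      simpa using hnadj
    omega
  · have hmY := (r.getVert m).2
    have hm₀ := (hind m hm.le 0 (Nat.zero_le _)).1
    have hm₁ := (hind m hm.le r.length le_rfl).1
    simp only [Function.comp_apply, Walk.getVert_zero, Walk.getVert_length] at hm₀ hm₁
    rcases hmY with h | h | h
    · exact absurd (hm₀.mp h) hm0.ne'
    · exact absurd (hm₁.mp h) hm.ne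
    · exact h

lemma even_add_of_isInducedPathThrough_level
    (heven : ∀ n : ℕ, 6 ≤ n → Even n → NoInducedCycle G n) {s s' : V}
    (hs : s ∈ level G v d) (hs' : s' ∈ level G v d) (hne : s ≠ s') (hnadj : ¬ G.Adj s s')
    {e₁ e₂ : ℕ → V} {l₁ l₂ : ℕ}
    (he₁ : G.IsInducedPathThrough (level G v (d + 1)) s s' e₁ l₁)
    (he₂ : G.IsInducedPathThrough (level G v (d + 1)) s s' e₂ l₂) (hl₁ : 3 ≤ l₁) (hl₂ : 3 ≤ l₂) :
    Even (l₁ + l₂) := by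
  obtain ⟨q, g, hq, hg⟩ := exists_isInducedPathThrough_closer hs hs' hne hnadj
  have hodd : ∀ e l, 3 ≤ l → G.IsInducedPathThrough (level G v (d + 1)) s s' e l →
      ¬ Even (l + q) := by
    intro e l hl he hev
    obtain ⟨f⟩ := nonempty_cycleGraph_embedding_of_paths (by omega) hq he.1 hg.1
      (he.2.1.trans hg.2.1.symm) (he.2.2.1.trans hg.2.2.1.symm)
      fun i hi j hj hi0 hj0 => ne_and_not_adj_of_mem_level_succ (he.2.2.2 i hi hi0)
        (hg.2.2.2 j hj hj0).2
    have : 6 ≤ l + q := by rw [Nat.even_iff] at hev; omega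
    exact (heven _ this hev).false f
  have h₁ := hodd e₁ l₁ hl₁ he₁
  have h₂ := hodd e₂ l₂ hl₂ he₂
  rw [Nat.even_iff] at h₁ h₂ ⊢
  omega

lemma false_of_crossing_pair (h3 : G.CliqueFree 3)
    (heven : ∀ n : ℕ, 6 ≤ n → Even n → NoInducedCycle G n)
    (a : cycleGraph 5 ↪g G) (ha : ∀ y, a y ∈ level G v (d + 1)) {s s' : V}
    (hs : s ∈ level G v d) (hs' : s' ∈ level G v d) (hnadj : ¬ G.Adj s s') {x : Fin 5}
    (h₁ : G.Adj s (a x)) (h₂ : ¬ G.Adj s (a (x + 2))) (h₃ : G.Adj s' (a (x + 2)))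
    (h₄ : ¬ G.Adj s' (a x)) : False := by
  obtain ⟨c, hc⟩ := exists_adj_iff_c5Trace h3 a h₁
  obtain ⟨c', hc'⟩ := exists_adj_iff_c5Trace h3 a h₃
  have hne : s ≠ s' := by rintro rfl; exact h₄ h₁
  have hout : ∀ {t}, t ∈ level G v d → ∀ y, a y ≠ t := fun ht y h => by
    have := (ha y).2
    rw [h, ht.2] at this
    omega
  let φ := c5WithTwo.embedding a hc hc' (hout hs) (hout hs') hne hnadj
  have hφ : φ '' {u | u.isLeft} ⊆ level G v (d + 1) := by
    rintro _ ⟨y | b, hb, rfl⟩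
    exacts [ha y, absurd hb (by simp)]
  obtain ⟨h4, l, hl, hpath⟩ := c5WithTwo_crossing_paths x c c' (mt (hc _).2 h₂) (mt (hc' _).2 h₄)
  have hlen : l.length = 4 ∨ l.length = 6 := by
    simp only [List.mem_cons, List.not_mem_nil, or_false] at hl
    rcases hl with rfl | rfl | rfl <;> simp
  have := even_add_of_isInducedPathThrough_level heven hs hs' hne hnadj
    ((h4.map φ).mono hφ) ((hpath.map φ).mono hφ) (by norm_num) (by omega)
  rw [Nat.even_iff] at this
  omega

theorem noInducedCycle_five_neighborsOf_inter_level (h3 : G.CliqueFree 3)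
    (heven : ∀ n : ℕ, 6 ≤ n → Even n → NoInducedCycle G n) {S : Set V}
    (hS : S ⊆ level G v d) (hstable : S.Pairwise fun a b => ¬ G.Adj a b) :
    NoInducedCycle (G.induce (neighborsOf G S ∩ level G v (d + 1))) 5 := by
  refine ⟨fun f => ?_⟩
  let a := (Embedding.induce _).comp f
  have ha (y) : a y ∈ neighborsOf G S ∩ level G v (d + 1) := (f y).2
  choose σ hσS hσ using fun y => (ha y).1
  choose t ht using fun y => exists_adj_iff_c5Trace h3 a (hσ y)
  obtain ⟨x, i, j, hix, hix2, hjx2, hjx⟩ := exists_c5Trace_crossing t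
  rw [← ht] at hix hix2 hjx2 hjx
  have hij : σ i ≠ σ j := fun h => hjx (h ▸ hix)
  exact false_of_crossing_pair h3 heven a (fun y => (ha y).2) (hS (hσS i)) (hS (hσS j))
    (hstable (hσS i) (hσS j) hij) hix hix2 hjx2 hjx

end Levelling

theorem stable_shadow_bounded_general_general (c' : ℕ)
    (hC : ∀ (W : Type) [Fintype W] (H : SimpleGraph W),
      H.CliqueFree 3 → NoInducedCycle H 5 →
      (∀ n : ℕ, 6 ≤ n → Even n → NoInducedCycle H n) → chi H < c')
    (V : Type) [Fintype V] (G : SimpleGraph V)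
    (h3 : G.CliqueFree 3)
    (heven : ∀ n : ℕ, 6 ≤ n → Even n → NoInducedCycle G n)
    (v : V) (k : ℕ) (hk : 1 ≤ k)
    (S : Set V) (hS : S ⊆ level G v (k - 1))
    (hstable : S.Pairwise fun a b => ¬ G.Adj a b) :
    chiSet G (neighborsOf G S ∩ level G v k) ≤ 2 * c' := by
  obtain ⟨d, rfl⟩ : ∃ d, k = d + 1 := ⟨k - 1, by omega⟩
  set A := neighborsOf G S ∩ level G v (d + 1)
  have : Fintype A := Fintype.ofFinite A
  have hlt : chi (G.induce A) < c' :=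
    hC A (G.induce A) (h3.comap (Embedding.induce A).isContained)
      (noInducedCycle_five_neighborsOf_inter_level h3 heven hS hstable)
      fun n hn6 hn => ⟨fun f => (heven n hn6 hn).false ((Embedding.induce A).comp f)⟩
  show chi (G.induce A) ≤ 2 * c'
  omega

/-- Suppose every graph of `C_{3,5,2k≥6}` has chromatic number `< c'`.
Let `G ∈ C_{3,2k≥6}`, `v` a vertex and `(N_0, N_1, …)` the `v`-levelling. For every
`k ≥ 1` and every stable set `S ⊆ N_{k-1}`, `χ(N(S) ∩ N_k) ≤ 2c'`. -/
theorem stable_shadow_bounded_general (c' : ℕ) (hc' : 0 < c')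
    (hC : ∀ (W : Type) [Fintype W] (H : SimpleGraph W),
      H.CliqueFree 3 → NoInducedCycle H 5 →
      (∀ n : ℕ, 6 ≤ n → Even n → NoInducedCycle H n) → chi H < c')
    (V : Type) [Fintype V] (G : SimpleGraph V)
    (h3 : G.CliqueFree 3)
    (heven : ∀ n : ℕ, 6 ≤ n → Even n → NoInducedCycle G n)
    (v : V) (k : ℕ) (hk : 1 ≤ k)
    (S : Set V) (hS : S ⊆ level G v (k - 1))
    (hstable : S.Pairwise fun a b => ¬ G.Adj a b) :
    chiSet G (neighborsOf G S ∩ level G v k) ≤ 2 * c' :=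
  stable_shadow_bounded_general_general c' hC V G h3 heven v k hk S hS hstable
end

section
/- Let G be a finite connected graph, let v be a vertex of G and (N_0, N_1, …) be the v-levelling. Then there exists an index k such that 2·χ(N_k) ≥ χ(G); that is, some level is colorful. -/
/-!
Colour each level `N_k` with `c_k : N_k → Fin m`, where `m` is the largest chromatic number of
a level, and give `x ∈ N_k` the colour `(c_k x, k mod 2)`. An edge either stays inside a level,
where `c_k` separates its ends, or joins consecutive levels, where the parities differ. Hence
`χ(G) ≤ 2m`, and a level attaining `m` is colorful.
-/

open SimpleGraph

namespace SimpleGraph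

variable {V : Type*} {G : SimpleGraph V}

theorem Adj.dist_le_dist_add_one_s14 {a b : V} (hab : G.Adj a b) (u : V) :
    G.dist u b ≤ G.dist u a + 1 := by
  rcases hab.diff_dist_adj (u := u) with h | h | h <;> omega

theorem Colorable.two_mul_of_fibers_colorable (d : V → ℕ)
    (hd : ∀ ⦃a b⦄, G.Adj a b → d b ≤ d a + 1) {m : ℕ}
    (hfib : ∀ j, (G.induce {x | d x = j}).Colorable m) : G.Colorable (2 * m) := by
  let c j := (hfib j).some
  let color (x : V) : Fin m := c (d x) ⟨x, rfl⟩
  -- `d a = d b` is not definitional, so `c (d b)` is reached by transport along `d x = j`.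
  have color_eq : ∀ x j (hx : d x = j), color x = c j ⟨x, hx⟩ := by
    rintro x _ rfl
    rfl
  have valid : ∀ {a b}, G.Adj a b →
      (color a, (d a : ZMod 2)) ≠ (color b, (d b : ZMod 2)) := by
    intro a b hab h
    obtain ⟨hcol, hpar⟩ := Prod.mk.inj h
    by_cases hlevel : d a = d b
    · rw [color_eq a _ rfl, color_eq b (d a) hlevel.symm] at hcol
      exact (c (d a)).valid (v := ⟨a, rfl⟩) (w := ⟨b, hlevel.symm⟩) hab hcol
    · have := hd hab
      have := hd hab.symm
      rw [ZMod.natCast_eq_natCast_iff'] at hpar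
      omega
  let C : G.Coloring (Fin m × ZMod 2) := Coloring.mk (fun x => (color x, (d x : ZMod 2))) valid
  simpa [mul_comm] using C.colorable

end SimpleGraph

section Levels

variable {V : Type} {G : SimpleGraph V}

theorem level_eq_of_forall_reachable {u : V} (hreach : ∀ x, G.Reachable u x) (k : ℕ) :
    level G u k = {x | G.dist u x = k} := by
  simp [level, hreach]

theorem colorable_of_chiSet_le [Finite V] {A : Set V} {m : ℕ} (h : chiSet G A ≤ m) :
    (G.induce A).Colorable m :=
  (colorable_chromaticNumber_of_fintype _).mono h

theorem chi_le_of_colorable {m : ℕ} (h : G.Colorable m) : chi G ≤ m :=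
  ENat.toNat_le_of_le_natCast h.chromaticNumber_le

end Levels

/-- In a finite connected graph, some level of any `v`-levelling is
colorful: there is `k` with `2·χ(N_k) ≥ χ(G)`. -/
theorem colorful_level_exists (V : Type) [Fintype V] (G : SimpleGraph V)
    (hconn : G.Connected) (v : V) :
    ∃ k : ℕ, chi G ≤ 2 * chiSet G (level G v k) := by
  have hreach : ∀ x, G.Reachable v x := hconn.preconnected v
  obtain ⟨x₀, -, hmax⟩ := Finset.exists_max_image Finset.univ
    (fun x => chiSet G (level G v (G.dist v x))) ⟨v, Finset.mem_univ v⟩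
  refine ⟨G.dist v x₀, chi_le_of_colorable ?_⟩
  refine Colorable.two_mul_of_fibers_colorable (G.dist v)
    (fun _ _ hab => hab.dist_le_dist_add_one_s14 v) fun j => ?_
  rw [← level_eq_of_forall_reachable hreach]
  rcases (level G v j).eq_empty_or_nonempty with hempty | ⟨x, -, rfl⟩
  · rw [hempty]
    exact Colorable.of_isEmpty _
  · exact colorable_of_chiSet_le (hmax x (Finset.mem_univ x))
end
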